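/- arXiv:2511.03485 — 2 statements merged into one kernel-verified Lean document; each statement's English description precedes it below -/
import Mathlib

section
/- Let $J : [0, \infty) \to \mathbb{N}$ and $N, N' : [0,\infty) \to \mathbb{N}$ be measurable, with $J$ nondecreasing, $J(t) \le n$ for all $t$, $N'(t) \le J(t)$, and suppose $N'(t + c) \ge N(t)$ for all $t \ge 0$ where $c > 0$ is a constant. Let $u > c$ be such that $N'(t) = J(t)$ for $t \ge u$. Then $\int_0^u (J(t) - N'(t))\, dt \le \int_0^{\infty} (J(t) - N(t))\, dt + n c$. -/
open MeasureTheory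

lemma nat_bdd_intervalIntegrable (g : ℝ → ℕ) (hg : Measurable g) (n : ℕ) (a b : ℝ)
    (hbd : ∀ t ∈ Set.uIoc a b, g t ≤ n) :
    IntervalIntegrable (fun t => (g t : ℝ)) MeasureTheory.volume a b := by
  rw [intervalIntegrable_iff]
  apply Measure.integrableOn_of_bounded (M := (n : ℝ)) (by rw [Set.uIoc]; exact measure_Ioc_lt_top.ne)
    (measurable_from_nat.comp hg).aestronglyMeasurable
  · refine (ae_restrict_iff' measurableSet_uIoc).mpr (Filter.Eventually.of_forall ?_)
    intro t ht
    simp only [Function.comp, Real.norm_eq_abs,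
      abs_of_nonneg (by positivity : (0:ℝ) ≤ (g t : ℝ))]
    exact_mod_cast hbd t ht

/-- Abstract time-shift flow-time bound: if `N'(t + c) ≥ N(t)` for all `t ≥ 0`,
`N' ≤ J ≤ n`, `N ≤ J`, `J` nondecreasing on `[0,∞)`, and `N' = J` on `[u, ∞)`, then
`∫₀ᵘ (J - N') ≤ ∫₀^∞ (J - N) + n·c`. -/
theorem time_shift_flow_bound (n : ℕ) (c u : ℝ) (hc : 0 < c) (hu : c < u)
    (J N N' : ℝ → ℕ)
    (hJmeas : Measurable J) (hNmeas : Measurable N) (hN'meas : Measurable N')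
    (hJmono : ∀ s t : ℝ, 0 ≤ s → s ≤ t → J s ≤ J t)
    (hJn : ∀ t : ℝ, J t ≤ n)
    (hN'J : ∀ t : ℝ, 0 ≤ t → N' t ≤ J t)
    (hNJ : ∀ t : ℝ, 0 ≤ t → N t ≤ J t)
    (hshift : ∀ t : ℝ, 0 ≤ t → N t ≤ N' (t + c))
    (hdone : ∀ t : ℝ, u ≤ t → N' t = J t)
    (hint : IntegrableOn (fun t => (J t : ℝ) - (N t : ℝ)) (Set.Ici 0)) :
    ∫ t in (0 : ℝ)..u, ((J t : ℝ) - (N' t : ℝ)) ≤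
      (∫ t in Set.Ici (0 : ℝ), ((J t : ℝ) - (N t : ℝ))) + (n : ℝ) * c := by
  have hc0 : (0:ℝ) ≤ c := hc.le
  have hcu : c ≤ u := hu.le
  have h0u : (0:ℝ) ≤ u := hc0.trans hcu
  have h0uc : (0:ℝ) ≤ u - c := by linarith
  -- integrabilities
  have intJ : ∀ a b : ℝ, IntervalIntegrable (fun t => (J t : ℝ)) volume a b :=
    fun a b => nat_bdd_intervalIntegrable J hJmeas n a b (fun t _ => hJn t)
  have intN' : ∀ a b : ℝ, 0 ≤ a → a ≤ b →
      IntervalIntegrable (fun t => (N' t : ℝ)) volume a b := by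
    intro a b ha hab
    refine nat_bdd_intervalIntegrable N' hN'meas n a b (fun t ht => ?_)
    rw [Set.uIoc_of_le hab] at ht
    exact (hN'J t (ha.trans ht.1.le)).trans (hJn t)
  have intN : ∀ a b : ℝ, 0 ≤ a → a ≤ b →
      IntervalIntegrable (fun t => (N t : ℝ)) volume a b := by
    intro a b ha hab
    refine nat_bdd_intervalIntegrable N hNmeas n a b (fun t ht => ?_)
    rw [Set.uIoc_of_le hab] at ht
    exact (hNJ t (ha.trans ht.1.le)).trans (hJn t)
  -- Step 1: split the LHS
  have hsplit : ∫ t in (0:ℝ)..u, ((J t : ℝ) - (N' t : ℝ))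
      = (∫ t in (0:ℝ)..u, (J t : ℝ)) - ∫ t in (0:ℝ)..u, (N' t : ℝ) :=
    intervalIntegral.integral_sub (intJ 0 u) (intN' 0 u le_rfl h0u)
  -- Step 2: ∫₀ᵘ N' ≥ ∫₀^{u-c} N
  have hN'lower : ∫ t in (0:ℝ)..(u - c), (N t : ℝ) ≤ ∫ t in (0:ℝ)..u, (N' t : ℝ) := by
    have h1 : ∫ t in (0:ℝ)..(u - c), (N t : ℝ)
        ≤ ∫ t in (0:ℝ)..(u - c), (N' (t + c) : ℝ) := by
      apply intervalIntegral.integral_mono_on h0uc (intN 0 (u-c) le_rfl h0uc)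
      · have := (intN' c u hc0 hcu).comp_add_right c
        simpa using this
      · intro t ht
        exact_mod_cast hshift t ht.1
    have h2 : ∫ t in (0:ℝ)..(u - c), (N' (t + c) : ℝ)
        = ∫ t in c..u, (N' t : ℝ) := by
      have := intervalIntegral.integral_comp_add_right (a := (0:ℝ)) (b := u - c)
        (d := c) (f := fun t => (N' t : ℝ))
      simpa using this
    have h3 : ∫ t in c..u, (N' t : ℝ) ≤ ∫ t in (0:ℝ)..u, (N' t : ℝ) := by
      have hsum : ∫ t in (0:ℝ)..u, (N' t : ℝ)
          = (∫ t in (0:ℝ)..c, (N' t : ℝ)) + ∫ t in c..u, (N' t : ℝ) :=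
        (intervalIntegral.integral_add_adjacent_intervals
          (intN' 0 c le_rfl hc0) (intN' c u hc0 hcu)).symm
      have hnn : 0 ≤ ∫ t in (0:ℝ)..c, (N' t : ℝ) :=
        intervalIntegral.integral_nonneg hc0 (fun t _ => by positivity)
      linarith
    linarith [h1, h2.le, h2.ge, h3]
  -- Step 3: ∫₀ᵘ J = ∫₀^{u-c} J + ∫_{u-c}^u J ≤ ∫₀^{u-c} J + n c
  have hJsplit : ∫ t in (0:ℝ)..u, (J t : ℝ)
      = (∫ t in (0:ℝ)..(u-c), (J t : ℝ)) + ∫ t in (u-c)..u, (J t : ℝ) :=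
    (intervalIntegral.integral_add_adjacent_intervals (intJ 0 (u-c)) (intJ (u-c) u)).symm
  have hJtail : ∫ t in (u-c)..u, (J t : ℝ) ≤ (n : ℝ) * c := by
    have : ∫ t in (u-c)..u, (J t : ℝ) ≤ ∫ _t in (u-c)..u, (n : ℝ) := by
      apply intervalIntegral.integral_mono_on (by linarith) (intJ (u-c) u)
        intervalIntegrable_const
      intro t _
      exact_mod_cast hJn t
    rwa [intervalIntegral.integral_const, smul_eq_mul, show u - (u - c) = c by ring,
      mul_comm] at this
  -- Step 4: ∫₀^{u-c} (J - N) ≤ ∫_{Ici 0} (J - N)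
  have hsub : (∫ t in (0:ℝ)..(u-c), (J t : ℝ)) - (∫ t in (0:ℝ)..(u-c), (N t : ℝ))
      = ∫ t in (0:ℝ)..(u-c), ((J t : ℝ) - (N t : ℝ)) :=
    (intervalIntegral.integral_sub (intJ 0 (u-c)) (intN 0 (u-c) le_rfl h0uc)).symm
  have htail : ∫ t in (0:ℝ)..(u-c), ((J t : ℝ) - (N t : ℝ))
      ≤ ∫ t in Set.Ici (0:ℝ), ((J t : ℝ) - (N t : ℝ)) := by
    rw [intervalIntegral.integral_of_le h0uc]
    apply setIntegral_mono_set hint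
    · refine (ae_restrict_iff' measurableSet_Ici).mpr (Filter.Eventually.of_forall ?_)
      intro t ht
      have := hNJ t ht
      simp only [Pi.zero_apply, sub_nonneg]
      exact_mod_cast this
    · exact Filter.Eventually.of_forall (fun t ht => ht.1.le)
  linarith [hsplit, hN'lower, hJsplit, hJtail, hsub, htail]
end

section
/- Let $k \ge 1$ be an integer, let $f(u) = m\lceil k u \rceil$ for $u \in [0,1]$ where $m \ge 1$ is an integer, and let $g : [0,1] \to [0, m]$ be integrable. Then $\int_0^1 \left( f(u) - \left\lfloor k \int_0^u g(y)\,dy \right\rfloor \right) du \ge k \int_0^1 (m - g(u))(1 - u)\, du$. -/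
/-!
Since `⌈k u⌉ ≥ k u` and `⌊k F u⌋ ≤ k F u` for `F u = ∫₀ᵘ g`, the integrand dominates
`k (m u - F u) = k ∫₀ᵘ (m - g)`. Exchanging the order of integration over the triangle
`0 ≤ y ≤ u ≤ 1` turns `∫₀¹ ∫₀ᵘ (m - g y) dy du` into `∫₀¹ (m - g y) (1 - y) dy`.
-/

open MeasureTheory Set

theorem integral_primitive_eq_integral_sub_smul {E : Type*} [NormedAddCommGroup E]
    [NormedSpace ℝ E] [CompleteSpace E] {g : ℝ → E} {a b : ℝ} (hab : a ≤ b) (hg : IntervalIntegrable g volume a b) :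
    ∫ u in a..b, ∫ y in a..u, g y = ∫ y in a..b, (b - y) • g y := by
  have h_int : IntegrableOn (fun p : ℝ × ℝ ↦ {y | y ≤ p.1}.indicator g p.2)
      (uIoc a b ×ˢ uIoc a b) := by
    rw [uIoc_of_le hab, IntegrableOn, Measure.volume_eq_prod, ← Measure.prod_restrict]
    exact (hg.1.comp_snd _).indicator (measurableSet_le measurable_snd measurable_fst)
  calc ∫ u in a..b, ∫ y in a..u, g y
      = ∫ u in a..b, ∫ y in a..b, {y | y ≤ u}.indicator g y :=
        intervalIntegral.integral_congr fun u hu ↦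
          (intervalIntegral.integral_indicator (by rwa [uIcc_of_le hab] at hu)).symm
    _ = ∫ y in a..b, ∫ u in a..b, {y | y ≤ u}.indicator g y :=
        intervalIntegral_intervalIntegral_swap h_int
    _ = ∫ y in a..b, (b - y) • g y := by
        refine intervalIntegral.integral_congr fun y hy ↦ ?_
        rw [uIcc_of_le hab] at hy
        have : (fun u ↦ {y | y ≤ u}.indicator g y) = (Ici y).indicator fun _ ↦ g y := by
          ext u; simp [indicator_apply]
        rw [this, intervalIntegral.integral_of_le hab, setIntegral_indicator measurableSet_Ici,
          setIntegral_congr_set ((ae_eq_refl _).inter Ioi_ae_eq_Ici.symm), Ioc_inter_Ioi,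
          max_eq_right hy.1, setIntegral_const, Real.volume_real_Ioc_of_le hy.2]

theorem IntervalIntegrable.floor {f : ℝ → ℝ} {μ : Measure ℝ} [IsLocallyFiniteMeasure μ] {a b : ℝ}
    (hf : IntervalIntegrable f μ a b) : IntervalIntegrable (fun x ↦ (⌊f x⌋ : ℝ)) μ a b := by
  refine (hf.norm.add (intervalIntegrable_const (c := (1 : ℝ)))).mono_fun' ?_
    (ae_of_all _ fun x ↦ ?_)
  · exact (measurable_from_top.comp_aemeasurable
      (Int.measurable_floor.comp_aemeasurable hf.def'.aemeasurable)).aestronglyMeasurable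
  · simp only [Real.norm_eq_abs, abs_le]
    constructor <;> linarith [Int.floor_le (f x), Int.sub_one_lt_floor (f x), neg_abs_le (f x),
      le_abs_self (f x)]

theorem mul_sub_le_mul_ceil_sub_floor {m : ℝ} (hm : 0 ≤ m) (x y : ℝ) :
    m * x - y ≤ m * ⌈x⌉ - ⌊y⌋ :=
  sub_le_sub (mul_le_mul_of_nonneg_left (Int.le_ceil x) hm) (Int.floor_le y)

theorem small_job_flow_lb_general (k m : ℕ) (g : ℝ → ℝ)
    (hg_int : MeasureTheory.IntegrableOn g (Set.Icc 0 1)) :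
    (k : ℝ) * ∫ u in (0 : ℝ)..1, ((m : ℝ) - g u) * (1 - u) ≤
      ∫ u in (0 : ℝ)..1,
        ((m : ℝ) * (⌈(k : ℝ) * u⌉ : ℤ) - ((⌊(k : ℝ) * ∫ y in (0 : ℝ)..u, g y⌋ : ℤ) : ℝ)) := by
  have hg : IntervalIntegrable g volume 0 1 :=
    (intervalIntegrable_iff_integrableOn_Icc_of_le zero_le_one).2 hg_int
  have hprimitive : ContinuousOn (fun u ↦ ∫ y in (0 : ℝ)..u, g y) (uIcc 0 1) :=
    intervalIntegral.continuousOn_primitive_interval' hg left_mem_uIcc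
  have hslack (u : ℝ) (hu : u ∈ uIcc 0 1) :
      ∫ y in (0 : ℝ)..u, ((m : ℝ) - g y) = m * u - ∫ y in (0 : ℝ)..u, g y := by
    rw [intervalIntegral.integral_sub intervalIntegrable_const
      (hg.mono_set (uIcc_subset_uIcc_left hu)), intervalIntegral.integral_const, smul_eq_mul,
      sub_zero, mul_comm]
  have hceil : Monotone fun u : ℝ ↦ ((⌈(k : ℝ) * u⌉ : ℤ) : ℝ) := fun u v huv ↦
    Int.cast_mono (Int.ceil_mono (mul_le_mul_of_nonneg_left huv k.cast_nonneg))
  calc (k : ℝ) * ∫ u in (0 : ℝ)..1, ((m : ℝ) - g u) * (1 - u)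
      = ∫ u in (0 : ℝ)..1, k * (m * u - ∫ y in (0 : ℝ)..u, g y) := by
        rw [intervalIntegral.integral_const_mul, ← intervalIntegral.integral_congr hslack,
          integral_primitive_eq_integral_sub_smul zero_le_one (intervalIntegrable_const.sub hg)]
        simp only [smul_eq_mul, mul_comm]
    _ ≤ _ := by
        refine intervalIntegral.integral_mono_on zero_le_one
          ((continuousOn_const.mul
            ((continuousOn_const.mul continuousOn_id).sub hprimitive)).intervalIntegrable)
          ((hceil.intervalIntegrable.const_mul _).sub
            (hprimitive.intervalIntegrable.const_mul _).floor) fun u _ ↦ ?_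
        rw [mul_sub, mul_left_comm]
        exact mul_sub_le_mul_ceil_sub_floor m.cast_nonneg _ _

/-- Small-job flow-time lower bound: with `f u = m⌈k u⌉` released jobs and at most
`⌊k ∫₀ᵘ g⌋` completed jobs by time `u`,
`∫₀¹ (f(u) - ⌊k ∫₀ᵘ g⌋) du ≥ k ∫₀¹ (m - g(u))(1 - u) du`. -/
theorem small_job_flow_lb (k m : ℕ) (hk : 1 ≤ k) (hm : 1 ≤ m) (g : ℝ → ℝ)
    (hg_int : MeasureTheory.IntegrableOn g (Set.Icc 0 1))
    (hg_bd : ∀ u ∈ Set.Icc (0 : ℝ) 1, g u ∈ Set.Icc (0 : ℝ) m) :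
    (k : ℝ) * ∫ u in (0 : ℝ)..1, ((m : ℝ) - g u) * (1 - u) ≤
      ∫ u in (0 : ℝ)..1,
        ((m : ℝ) * (⌈(k : ℝ) * u⌉ : ℤ) - ((⌊(k : ℝ) * ∫ y in (0 : ℝ)..u, g y⌋ : ℤ) : ℝ)) :=
  small_job_flow_lb_general k m g hg_int
end
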